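/- Let g : ℝ → ℝ be a step function defined by a strictly increasing sequence of points (x_i)_{i∈ℤ} with g(x) = g_i on [x_{i-1/2}, x_{i+1/2}), where only finitely many g_i are nonzero. Then the total variation of g, defined as the supremum over C¹ compactly supported test functions φ with ‖φ‖_∞ ≤ 1 of ∫ φ'(x) g(x) dx, equals ∑_{i∈ℤ} |g_{i+1} - g_i|. -/

import Mathlib

/-!
Integrating `φ'` over each cell `[x_{i-1/2}, x_{i+1/2})` and summing by parts gives
`∫ φ' G = ∑ (g_i - g_{i+1}) φ(x_{i+1/2})`, which is at most `∑ |g_{i+1} - g_i|` when `|φ| ≤ 1`.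
The bound is attained by a sum of smooth bumps with disjoint supports taking the value
`sign (g_i - g_{i+1})` at `x_{i+1/2}`.
-/

open MeasureTheory Set Filter Topology Function

theorem integral_Ico_deriv_eq_sub {E : Type*} [NormedAddCommGroup E] [NormedSpace ℝ E]
    [CompleteSpace E] {φ : ℝ → E} (hφ : ContDiff ℝ 1 φ) {a b : ℝ} (hab : a ≤ b) :
    ∫ y in Ico a b, deriv φ y = φ b - φ a := by
  rw [integral_Ico_eq_integral_Ioo, ← integral_Ioc_eq_integral_Ioo,
    ← intervalIntegral.integral_of_le hab]
  exact intervalIntegral.integral_deriv_eq_sub (fun z _ => hφ.differentiable one_ne_zero z)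
    ((hφ.continuous_deriv le_rfl).intervalIntegrable a b)

section StepFunction

variable {b : ℤ → ℝ} {g : ℤ → ℝ} {G : ℝ → ℝ}

theorem eq_sum_indicator_Ico_of_forall_mem_Ico (hb : Monotone b) {S : Finset ℤ}
    (hS : support g ⊆ S) (hG : ∀ i, ∀ y ∈ Ico (b i) (b (i + 1)), G y = g i)
    (hcov : ∀ y, ∃ i, y ∈ Ico (b i) (b (i + 1))) :
    G = fun y => ∑ i ∈ S, (Ico (b i) (b (i + 1))).indicator (fun _ => g i) y := by
  funext y
  obtain ⟨i, hi⟩ := hcov y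
  rw [Finset.sum_eq_single i, indicator_of_mem hi, hG i y hi]
  · intro j _ hji
    have hdisj : Disjoint (Ico (b j) (b (j + 1))) (Ico (b i) (b (i + 1))) := by
      simpa [onFun, Order.succ_eq_add_one] using hb.pairwise_disjoint_on_Ico_succ hji
    exact indicator_of_notMem (fun hj => hdisj.ne_of_mem hj hi rfl) _
  · intro hiS
    rw [indicator_of_mem hi, notMem_support.1 (fun h => hiS (hS h))]

theorem integral_deriv_mul_eq_tsum (hb : Monotone b) (hg : (support g).Finite)
    (hG : ∀ i, ∀ y ∈ Ico (b i) (b (i + 1)), G y = g i)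
    (hcov : ∀ y, ∃ i, y ∈ Ico (b i) (b (i + 1))) {φ : ℝ → ℝ} (hφ : ContDiff ℝ 1 φ)
    (hφc : HasCompactSupport φ) :
    ∫ y, deriv φ y * G y = ∑' i, g i * (φ (b (i + 1)) - φ (b i)) := by
  have hφ' : Integrable (deriv φ) :=
    (hφ.continuous_deriv le_rfl).integrable_of_hasCompactSupport hφc.deriv
  rw [eq_sum_indicator_Ico_of_forall_mem_Ico hb hg.coe_toFinset.ge hG hcov,
    tsum_eq_sum (s := hg.toFinset) fun i hi => by simp_all]
  simp_rw [Finset.mul_sum, ← indicator_mul_right]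
  rw [integral_finsetSum _ fun i _ => (hφ'.mul_const (g i)).indicator measurableSet_Ico]
  refine Finset.sum_congr rfl fun i _ => ?_
  rw [integral_indicator measurableSet_Ico, integral_mul_const,
    integral_Ico_deriv_eq_sub hφ (hb (Int.le_add_one le_rfl)), mul_comm]

end StepFunction

theorem tsum_mul_sub_eq_tsum_sub_mul {g : ℤ → ℝ} (hg : (support g).Finite) (A : ℤ → ℝ) :
    ∑' i, g i * (A (i + 1) - A i) = ∑' i, (g i - g (i + 1)) * A (i + 1) := by
  have hsum : ∀ B : ℤ → ℝ, Summable fun i => g i * B i := fun B =>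
    summable_of_hasFiniteSupport (hg.subset (support_mul_subset_left _ _))
  have hshift : ∑' i, g i * A i = ∑' i, g (i + 1) * A (i + 1) :=
    ((Equiv.addRight 1).tsum_eq fun i => g i * A i).symm
  simp_rw [mul_sub, sub_mul]
  rw [(hsum _).tsum_sub (hsum _), hshift]
  exact ((hsum _).tsum_sub ((Equiv.addRight 1).summable_iff.2 (hsum A))).symm

theorem Finset.exists_pos_forall_two_mul_le_dist {ι X : Type*} [MetricSpace X] (S : Finset ι)
    {p : ι → X} (hp : Injective p) :
    ∃ δ > 0, ∀ i ∈ S, ∀ j ∈ S, i ≠ j → 2 * δ ≤ dist (p i) (p j) := by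
  have : ∀ᶠ δ in 𝓝[>] (0 : ℝ), ∀ i ∈ S, ∀ j ∈ S, i ≠ j → 2 * δ ≤ dist (p i) (p j) := by
    refine (eventually_all_finset S).2 fun i _ => (eventually_all_finset S).2 fun j _ => ?_
    by_cases hij : i = j
    · exact Eventually.of_forall fun _ h => absurd hij h
    have hpos : 0 < dist (p i) (p j) / 2 := half_pos (dist_pos.2 (hp.ne hij))
    filter_upwards [nhdsWithin_le_nhds (eventually_lt_nhds hpos)] with δ hδ _
    linarith
  exact (this.and self_mem_nhdsWithin).exists.imp fun δ h => ⟨h.2, h.1⟩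

theorem exists_contDiff_hasCompactSupport_abs_le_one_eq {ι E : Type*} [NormedAddCommGroup E]
    [NormedSpace ℝ E] [FiniteDimensional ℝ E] (n : ℕ∞) (S : Finset ι) {p : ι → E}
    (hp : Injective p) {v : ι → ℝ} (hv : ∀ i, |v i| ≤ 1) :
    ∃ φ : E → ℝ, ContDiff ℝ n φ ∧ HasCompactSupport φ ∧ (∀ y, |φ y| ≤ 1) ∧
      ∀ i ∈ S, φ (p i) = v i := by
  obtain ⟨δ, hδ, hsep⟩ := S.exists_pos_forall_two_mul_le_dist hp
  let ψ : ∀ i, ContDiffBump (p i) := fun i => ⟨δ / 2, δ, half_pos hδ, half_lt_self hδ⟩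
  set φ : E → ℝ := fun y => ∑ j ∈ S, v j * ψ j y
  -- `2 * δ`-separation makes the supports `ball (p i) δ` of the bumps pairwise disjoint
  have hlocal : ∀ i ∈ S, ∀ y ∈ Metric.ball (p i) δ, φ y = v i * ψ i y := by
    intro i hi y hy
    refine Finset.sum_eq_single_of_mem i hi fun j hj hji => ?_
    have : δ ≤ dist y (p j) := by
      have := hsep i hi j hj hji.symm
      have := dist_triangle (p i) y (p j)
      have := Metric.mem_ball'.1 hy
      linarith
    rw [(ψ j).zero_of_le_dist this, mul_zero]
  have hzero : ∀ y, (∀ i ∈ S, y ∉ Metric.ball (p i) δ) → φ y = 0 := fun y hy =>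
    Finset.sum_eq_zero fun j hj => by
      rw [notMem_support.1 (fun h => hy j hj ((ψ j).support_eq ▸ h)), mul_zero]
  refine ⟨φ, ?_, ?_, fun y => ?_, fun i hi => ?_⟩
  · exact ContDiff.sum fun j _ => contDiff_const.mul (ψ j).contDiff
  · refine HasCompactSupport.intro (S.isCompact_biUnion fun i _ => isCompact_closedBall (p i) δ)
      fun y hy => hzero y fun i hi h => hy (mem_biUnion hi (Metric.ball_subset_closedBall h))
  · by_cases hy : ∃ i ∈ S, y ∈ Metric.ball (p i) δ
    · obtain ⟨i, hi, hy⟩ := hy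
      rw [hlocal i hi y hy, abs_mul, abs_of_nonneg ((ψ i).nonneg' y)]
      exact mul_le_one₀ (hv i) ((ψ i).nonneg' y) (ψ i).le_one
    · rw [hzero y fun i hi h => hy ⟨i, hi, h⟩, abs_zero]
      exact zero_le_one
  · rw [hlocal i hi (p i) (Metric.mem_ball_self hδ),
      (ψ i).one_of_mem_closedBall (Metric.mem_closedBall_self (ψ i).rIn_pos.le), mul_one]

theorem isGreatest_tsum_mul_apply {ι E : Type*} [NormedAddCommGroup E] [NormedSpace ℝ E]
    [FiniteDimensional ℝ E] {c : ι → ℝ} (hc : (support c).Finite) {p : ι → E}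
    (hp : Injective p) :
    IsGreatest {v | ∃ φ : E → ℝ, ContDiff ℝ 1 φ ∧ HasCompactSupport φ ∧ (∀ y, |φ y| ≤ 1) ∧
      v = ∑' i, c i * φ (p i)} (∑' i, |c i|) := by
  have hsum : ∀ w : ι → ℝ, Summable fun i => c i * w i := fun w =>
    summable_of_hasFiniteSupport (hc.subset (support_mul_subset_left _ _))
  constructor
  · obtain ⟨φ, hφ, hφc, hφ1, hφp⟩ := exists_contDiff_hasCompactSupport_abs_le_one_eq 1
      hc.toFinset hp (v := fun i => SignType.sign (c i)) fun i => by
        rcases lt_trichotomy (c i) 0 with h | h | h <;> simp [h]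
    refine ⟨φ, hφ, hφc, hφ1, tsum_congr fun i => ?_⟩
    by_cases hi : c i = 0
    · simp [hi]
    · rw [hφp i (hc.mem_toFinset.2 hi), self_mul_sign]
  · rintro _ ⟨φ, -, -, hφ1, rfl⟩
    refine (hsum _).tsum_le_tsum (fun i => ?_)
      (summable_of_hasFiniteSupport (hc.subset fun _ => abs_ne_zero.1))
    calc c i * φ (p i) ≤ |c i| * |φ (p i)| := (le_abs_self _).trans (abs_mul _ _).le
      _ ≤ |c i| := mul_le_of_le_one_right (abs_nonneg _) (hφ1 _)

/-- Total variation of a finitely supported step function equals the sum of jumps. -/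
theorem step_function_total_variation
    (x : ℤ → ℝ) (hx : StrictMono x)
    (g : ℤ → ℝ) (hg : (Function.support g).Finite)
    (G : ℝ → ℝ)
    (hG : ∀ i : ℤ, ∀ y ∈ Set.Ico ((x (i - 1) + x i) / 2) ((x i + x (i + 1)) / 2), G y = g i)
    (hcov : ∀ y : ℝ, ∃ i : ℤ, y ∈ Set.Ico ((x (i - 1) + x i) / 2) ((x i + x (i + 1)) / 2)) :
    sSup {v : ℝ | ∃ φ : ℝ → ℝ, ContDiff ℝ 1 φ ∧ HasCompactSupport φ ∧
        (∀ y, |φ y| ≤ 1) ∧ v = ∫ y, deriv φ y * G y} =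
      ∑' i : ℤ, |g (i + 1) - g i| := by
  set b : ℤ → ℝ := fun i => (x (i - 1) + x i) / 2
  have hb_succ : ∀ i, b (i + 1) = (x i + x (i + 1)) / 2 := fun i => by simp [b]
  have hb : StrictMono b := fun i j hij => by
    dsimp only [b]
    linarith [hx hij, hx (show i - 1 < j - 1 by omega)]
  have hval : ∀ φ : ℝ → ℝ, ContDiff ℝ 1 φ → HasCompactSupport φ →
      ∫ y, deriv φ y * G y = ∑' i, (g i - g (i + 1)) * φ (b (i + 1)) := fun φ hφ hφc => by
    rw [integral_deriv_mul_eq_tsum hb.monotone hg (fun i y hy => hG i y (hb_succ i ▸ hy))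
      (fun y => (hcov y).imp fun i hi => hb_succ i ▸ hi) hφ hφc]
    exact tsum_mul_sub_eq_tsum_sub_mul hg (φ ∘ b)
  have hc : (support fun i => g i - g (i + 1)).Finite :=
    (hg.union (hg.preimage (add_left_injective 1).injOn)).subset (support_sub g (g ∘ (· + 1)))
  rw [tsum_congr fun i => abs_sub_comm (g (i + 1)) (g i),
    ← (isGreatest_tsum_mul_apply hc (p := fun i => b (i + 1))
    (hb.injective.comp (add_left_injective 1))).csSup_eq]
  congr 1
  ext v
  exact exists_congr fun φ => and_congr_right fun hφ => and_congr_right fun hφc => by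
    rw [hval φ hφ hφc]
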